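/- Let X be a reflexive real Banach space and T a compact linear operator from X to X with operator norm 1 that is a right-symmetric point of the space of compact operators on X (with the operator norm), with M_T = {x₀, −x₀} for some unit vector x₀ ∈ X. Suppose T is left orthogonality preserving at x₀. If x₀ is an eigenvector of T, then x₀ is both a left-symmetric and a right-symmetric point of X. -/

import Mathlib

/-- Birkhoff–James orthogonality: `x ⊥_B y` iff `‖x + λ • y‖ ≥ ‖x‖` for every real `λ`. -/
def BJOrth {E : Type*} [NormedAddCommGroup E] [NormedSpace ℝ E] (x y : E) : Prop :=
  ∀ lam : ℝ, ‖x‖ ≤ ‖x + lam • y‖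

/-- `x` is a left-symmetric point: `x ⊥_B y` implies `y ⊥_B x` for all `y`. -/
def LeftSymmetricPt {E : Type*} [NormedAddCommGroup E] [NormedSpace ℝ E] (x : E) : Prop :=
  ∀ y : E, BJOrth x y → BJOrth y x

/-- `x` is a right-symmetric point: `y ⊥_B x` implies `x ⊥_B y` for all `y`. -/
def RightSymmetricPt {E : Type*} [NormedAddCommGroup E] [NormedSpace ℝ E] (x : E) : Prop :=
  ∀ y : E, BJOrth y x → BJOrth x y

/-- A nonzero `x` is a smooth point if there is exactly one norm-one continuous linear
functional `f` with `f x = ‖x‖`. -/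
def SmoothPoint {E : Type*} [NormedAddCommGroup E] [NormedSpace ℝ E] (x : E) : Prop :=
  ∃! f : E →L[ℝ] ℝ, ‖f‖ = 1 ∧ f x = ‖x‖

/-- A normed space is reflexive if the canonical embedding into the double dual is onto. -/
def ReflexiveSpace (E : Type*) [NormedAddCommGroup E] [NormedSpace ℝ E] : Prop :=
  Function.Surjective (NormedSpace.inclusionInDoubleDual ℝ E)

/-- `T` (a compact operator) is a right-symmetric point of the space of compact operators
(with the operator norm): `A ⊥_B T` implies `T ⊥_B A` for every compact operator `A`. -/
def RightSymmetricCompactOp {X Y : Type*} [NormedAddCommGroup X] [NormedSpace ℝ X]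
    [NormedAddCommGroup Y] [NormedSpace ℝ Y] (T : X →L[ℝ] Y) : Prop :=
  ∀ A : X →L[ℝ] Y, IsCompactOperator A → BJOrth A T → BJOrth T A

/-- `T` is left orthogonality preserving at `x`: `x ⊥_B y` implies `T x ⊥_B T y`. -/
def LeftOPAt {X Y : Type*} [NormedAddCommGroup X] [NormedSpace ℝ X]
    [NormedAddCommGroup Y] [NormedSpace ℝ Y] (T : X →L[ℝ] Y) (x : X) : Prop :=
  ∀ y : X, BJOrth x y → BJOrth (T x) (T y)

/-- Approximate Birkhoff–James orthogonality in the sense of Dragomir–Chmieliński: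
`x ⊥_D^ε y` iff `‖x + λ • y‖ ≥ √(1 - ε²) * ‖x‖` for every real `λ`. -/
def ApproxOrthD {E : Type*} [NormedAddCommGroup E] [NormedSpace ℝ E]
    (ε : ℝ) (x y : E) : Prop :=
  ∀ lam : ℝ, Real.sqrt (1 - ε ^ 2) * ‖x‖ ≤ ‖x + lam • y‖

/-- Approximate Birkhoff–James orthogonality in the sense of Chmieliński:
`x ⊥_B^ε y` iff `‖x + λ • y‖² ≥ ‖x‖² - 2ε‖x‖‖λ • y‖` for every real `λ`. -/
def ApproxOrthC {E : Type*} [NormedAddCommGroup E] [NormedSpace ℝ E]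
    (ε : ℝ) (x y : E) : Prop :=
  ∀ lam : ℝ, ‖x‖ ^ 2 - 2 * ε * ‖x‖ * ‖lam • y‖ ≤ ‖x + lam • y‖ ^ 2


/-!
On a reflexive space the closed unit ball is weakly compact, and a compact operator is continuous
from it (weak topology) to the norm topology. So if `T ⊥_B A` with `T`, `A` compact, the weakly
closed sets `{x : ‖T x + t A x‖ ≥ ‖T‖}`, `t > 0`, are nonempty (`T + t A` attains its norm) and
nested (`t ↦ ‖T x + t A x‖` is convex), hence have a common point. Letting `t → 0` shows that it
is a norming point of `T`, i.e. `±x₀`, whence `T x₀ ⊥_B A x₀`.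

In the theorem, `x₀ ⊥_B y` gives `g ⊗ x₀ ⊥_B T` for a norming functional `g` of `y` (evaluate at
`y / ‖y‖` and use that `T` preserves orthogonality at the eigenvector `x₀`), and `y ⊥_B x₀` gives
`f ⊗ y ⊥_B T` for a norming functional `f` of `x₀` (evaluate at `x₀`). Right symmetry of `T`
reverses both, and the previous paragraph turns `T ⊥_B A` into `μ x₀ ⊥_B A x₀`, which says
`g x₀ = 0`, resp. `x₀ ⊥_B y`.
-/
open Metric Set Filter Topology

section BirkhoffJames

variable {E : Type*} [NormedAddCommGroup E] [NormedSpace ℝ E] {x y : E}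

theorem bjOrth_zero_left (y : E) : BJOrth 0 y := fun _ => by simp

theorem BJOrth.smul_left (h : BJOrth x y) (a : ℝ) : BJOrth (a • x) y := by
  intro lam
  rcases eq_or_ne a 0 with rfl | ha
  · simp
  calc ‖a • x‖ = ‖a‖ * ‖x‖ := norm_smul a x
    _ ≤ ‖a‖ * ‖x + (a⁻¹ * lam) • y‖ := by gcongr; exact h _
    _ = ‖a • x + lam • y‖ := by rw [← norm_smul, smul_add, smul_smul, mul_inv_cancel_left₀ ha]

theorem BJOrth.smul_right (h : BJOrth x y) (b : ℝ) : BJOrth x (b • y) := fun lam => by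
  simpa only [smul_smul] using h (lam * b)

theorem BJOrth.of_smul_left {a : ℝ} (ha : a ≠ 0) (h : BJOrth (a • x) y) : BJOrth x y := by
  simpa only [smul_smul, inv_mul_cancel₀ ha, one_smul] using h.smul_left a⁻¹

theorem eq_zero_of_bjOrth_smul_self (hx : x ≠ 0) {c : ℝ} (h : BJOrth x (c • x)) : c = 0 := by
  by_contra hc
  have := h (-c⁻¹)
  rw [smul_smul, neg_mul, inv_mul_cancel₀ hc, neg_one_smul, add_neg_cancel, norm_zero] at this
  exact hx (norm_le_zero_iff.1 this)

theorem bjOrth_of_dual {g : StrongDual ℝ E} (hg : ‖g‖ ≤ 1) (hgx : g x = ‖x‖) (hgy : g y = 0) :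
    BJOrth x y := fun lam =>
  calc ‖x‖ = g (x + lam • y) := by simp [hgx, hgy]
    _ ≤ ‖g‖ * ‖x + lam • y‖ := (Real.le_norm_self _).trans (g.le_opNorm _)
    _ ≤ ‖x + lam • y‖ := mul_le_of_le_one_left (norm_nonneg _) hg

-- Convexity of `t ↦ ‖u + t • v‖`.
theorem le_norm_add_smul_of_le {u v : E} {c a t : ℝ} (hu : ‖u‖ ≤ c) (ha : 0 < a) (hat : a ≤ t)
    (h : c ≤ ‖u + a • v‖) : c ≤ ‖u + t • v‖ := by
  have ht : 0 < t := ha.trans_le hat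
  set s := a / t
  have hs : s ≤ 1 := (div_le_one ht).2 hat
  have hconv : u + a • v = (1 - s) • u + s • (u + t • v) := by
    rw [smul_add, sub_smul, one_smul, smul_smul, div_mul_cancel₀ a ht.ne']
    abel
  have : ‖u + a • v‖ ≤ (1 - s) * ‖u‖ + s * ‖u + t • v‖ := by
    rw [hconv]
    refine (norm_add_le _ _).trans_eq ?_
    rw [norm_smul, norm_smul, Real.norm_of_nonneg (by linarith),
      Real.norm_of_nonneg (by positivity)]
  nlinarith [div_pos ha ht]

theorem le_norm_of_forall_pos_le_norm_add_smul {u v : E} {c : ℝ}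
    (h : ∀ t : ℝ, 0 < t → c ≤ ‖u + t • v‖) : c ≤ ‖u‖ := by
  have hlim : Tendsto (fun t : ℝ => ‖u + t • v‖) (𝓝[>] 0) (𝓝 ‖u‖) := by
    refine tendsto_nhdsWithin_of_tendsto_nhds ?_
    simpa using ((continuous_const.add (continuous_id.smul continuous_const)).norm.tendsto
      (0 : ℝ) : Tendsto (fun t : ℝ => ‖u + t • v‖) _ _)
  exact ge_of_tendsto hlim (eventually_nhdsWithin_of_forall h)

end BirkhoffJames

theorem ContinuousOn.of_comp_of_mapsTo_isCompact {α β γ : Type*} [TopologicalSpace α]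
    [TopologicalSpace β] [TopologicalSpace γ] [T2Space γ] {ι : β → γ} {f : α → β} {s : Set α}
    {C : Set β} (hι : Continuous ι) (hιC : InjOn ι C) (hC : IsCompact C) (hfs : MapsTo f s C)
    (hf : ContinuousOn (ι ∘ f) s) : ContinuousOn f s := by
  have : CompactSpace C := isCompact_iff_compactSpace.mp hC
  have hemb : IsClosedEmbedding (C.domRestrict ι) :=
    (hι.comp continuous_subtype_val).isClosedEmbedding (injOn_iff_injective.1 hιC)
  rw [continuousOn_iff_continuous_domRestrict] at hf ⊢
  have hrestrict : Continuous (hfs.restrict f s C) := hemb.isInducing.continuous_iff.2 hf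
  exact continuous_subtype_val.comp hrestrict

section Operators

variable {X Y : Type*} [NormedAddCommGroup X] [NormedSpace ℝ X]
  [NormedAddCommGroup Y] [NormedSpace ℝ Y]

theorem ContinuousLinearMap.bjOrth_of_apply {A T : X →L[ℝ] Y} {u : X} (hu : ‖u‖ ≤ 1)
    (hA : ‖A‖ ≤ ‖A u‖) (h : BJOrth (A u) (T u)) : BJOrth A T := fun lam =>
  calc ‖A‖ ≤ ‖A u + lam • T u‖ := hA.trans (h lam)
    _ = ‖(A + lam • T) u‖ := rfl
    _ ≤ ‖A + lam • T‖ := (A + lam • T).unit_le_opNorm u hu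

theorem isCompactOperator_smulRight (g : StrongDual ℝ X) (y : Y) :
    IsCompactOperator (g.smulRight y) :=
  (isCompactOperator_of_locallyCompactSpace_rng
    (ContinuousLinearMap.toSpanSingleton ℝ y)).comp_clm g

theorem IsCompactOperator.continuousOn_weakSpace {S : X →L[ℝ] Y} (hS : IsCompactOperator S)
    (r : ℝ) : ContinuousOn (fun w => S ((toWeakSpace ℝ X).symm w))
      (toWeakSpace ℝ X '' closedBall 0 r) := by
  obtain ⟨C, hC, hSC⟩ := IsCompactOperator.image_closedBall_subset_compact
    (f := (S : X →ₗ[ℝ] Y)) hS r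
  -- On the norm-compact set `C` the weak topology coincides with the norm topology.
  refine .of_comp_of_mapsTo_isCompact (toWeakSpaceCLM ℝ Y).continuous
    (toWeakSpace ℝ Y).injective.injOn hC ?_ (WeakSpace.map S).continuous.continuousOn
  rintro _ ⟨x, hx, rfl⟩
  exact hSC ⟨x, hx, rfl⟩

theorem ReflexiveSpace.isCompact_closedBall (hX : ReflexiveSpace X) (r : ℝ) :
    IsCompact (toWeakSpace ℝ X '' closedBall 0 r) := by
  -- Banach–Alaoglu in the bidual, transported by the weak*-to-weak continuous inverse of `e`.
  let e := LinearIsometryEquiv.ofSurjective (NormedSpace.inclusionInDoubleDualLi ℝ) hX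
  let Φ : WeakDual ℝ (StrongDual ℝ X) → WeakSpace ℝ X :=
    fun z => toWeakSpace ℝ X (e.symm (WeakDual.toStrongDual z))
  have hΦ : Continuous Φ := WeakBilin.continuous_of_continuous_eval _ fun g =>
    (WeakDual.eval_continuous g).congr fun z => by
      show z g = g (e.symm (WeakDual.toStrongDual z))
      exact (DFunLike.congr_fun (e.apply_symm_apply (WeakDual.toStrongDual z)) g).symm
  have himage : Φ '' (WeakDual.toStrongDual ⁻¹' closedBall 0 r) =
      toWeakSpace ℝ X '' closedBall 0 r := by
    rw [← image_image, ← image_image (f := WeakDual.toStrongDual),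
      image_preimage_eq _ WeakDual.toStrongDual.surjective,
      e.symm.image_closedBall, e.symm.map_zero]
  rw [← himage]
  exact (WeakDual.isCompact_closedBall 0 r).image hΦ

theorem IsCompactOperator.exists_norm_apply_eq_opNorm (hX : ReflexiveSpace X) {S : X →L[ℝ] Y}
    (hS : IsCompactOperator S) : ∃ x, ‖x‖ ≤ 1 ∧ ‖S x‖ = ‖S‖ := by
  obtain ⟨_, ⟨x, hx, rfl⟩, hmax⟩ := (hX.isCompact_closedBall 1).exists_isMaxOn
    ((nonempty_closedBall.2 zero_le_one).image _) (hS.continuousOn_weakSpace 1).norm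
  rw [mem_closedBall_zero_iff] at hx
  refine ⟨x, hx, le_antisymm (S.unit_le_opNorm x hx)
    (S.opNorm_le_of_unit_norm (norm_nonneg _) fun y hy => ?_)⟩
  simpa using hmax ⟨y, mem_closedBall_zero_iff.2 hy.le, rfl⟩

theorem exists_forall_pos_opNorm_le_norm_add_smul (hX : ReflexiveSpace X) {T A : X →L[ℝ] Y}
    (hT : IsCompactOperator T) (hA : IsCompactOperator A) (h : BJOrth T A) :
    ∃ x, ‖x‖ ≤ 1 ∧ ∀ t : ℝ, 0 < t → ‖T‖ ≤ ‖T x + t • A x‖ := by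
  set K := toWeakSpace ℝ X '' closedBall 0 1
  let σ := (toWeakSpace ℝ X).symm
  have hK : IsCompact K := hX.isCompact_closedBall 1
  have hσ : ∀ w ∈ K, ‖σ w‖ ≤ 1 := by
    rintro _ ⟨x, hx, rfl⟩
    simpa [σ] using hx
  let F : {t : ℝ // 0 < t} → Set (WeakSpace ℝ X) := fun t =>
    K ∩ {w | ‖T‖ ≤ ‖T (σ w) + t.1 • A (σ w)‖}
  have hclosed : ∀ t, IsClosed (F t) := fun t =>
    ((hT.continuousOn_weakSpace 1).add ((hA.continuousOn_weakSpace 1).const_smul t.1)).norm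
      |>.preimage_isClosed_of_isClosed hK.isClosed isClosed_Ici
  have hmono : ∀ s t : {t : ℝ // 0 < t}, s.1 ≤ t.1 → F s ⊆ F t := fun s t hst w ⟨hw, hws⟩ =>
    ⟨hw, le_norm_add_smul_of_le (T.unit_le_opNorm _ (hσ w hw)) s.2 hst hws⟩
  have hne : ∀ t, (F t).Nonempty := by
    intro t
    have hc : IsCompactOperator (T + t.1 • A) := hT.add (hA.smul t.1)
    obtain ⟨x, hx, hnorm⟩ := hc.exists_norm_apply_eq_opNorm hX
    refine ⟨toWeakSpace ℝ X x, ⟨x, mem_closedBall_zero_iff.2 hx, rfl⟩, ?_⟩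
    exact (h t.1).trans_eq hnorm.symm
  have : Nonempty {t : ℝ // 0 < t} := ⟨⟨1, one_pos⟩⟩
  obtain ⟨w, hw⟩ := IsCompact.nonempty_iInter_of_directed_nonempty_isCompact_isClosed F
    (fun s t => ⟨⟨min s t, lt_min s.2 t.2⟩, hmono _ _ (min_le_left _ _),
      hmono _ _ (min_le_right _ _)⟩) hne
    (fun t => hK.of_isClosed_subset (hclosed t) inter_subset_left) hclosed
  rw [mem_iInter] at hw
  exact ⟨σ w, hσ w (hw ⟨1, one_pos⟩).1, fun t ht => (hw ⟨t, ht⟩).2⟩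

variable {T A : X →L[ℝ] Y} {x₀ : X}

theorem norm_apply_eq_opNorm_of_normAttainSet_eq_pair
    (hMT : {x : X | ‖x‖ = 1 ∧ ‖T x‖ = ‖T‖} = {x₀, -x₀}) : ‖T x₀‖ = ‖T‖ :=
  (hMT ▸ mem_insert x₀ _ : x₀ ∈ {x : X | ‖x‖ = 1 ∧ ‖T x‖ = ‖T‖}).2

theorem norm_apply_le_norm_add_smul_of_bjOrth (hX : ReflexiveSpace X) (hT : IsCompactOperator T)
    (hA : IsCompactOperator A) (hMT : {x : X | ‖x‖ = 1 ∧ ‖T x‖ = ‖T‖} = {x₀, -x₀})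
    (h : BJOrth T A) {t : ℝ} (ht : 0 < t) : ‖T x₀‖ ≤ ‖T x₀ + t • A x₀‖ := by
  have hTx₀ := norm_apply_eq_opNorm_of_normAttainSet_eq_pair hMT
  obtain ⟨x, hx, hxA⟩ := exists_forall_pos_opNorm_le_norm_add_smul hX hT hA h
  rcases (norm_nonneg T).eq_or_lt with hT0 | hTpos
  · exact hTx₀.trans_le (hT0 ▸ norm_nonneg _)
  have hTx : ‖T‖ ≤ ‖T x‖ := le_norm_of_forall_pos_le_norm_add_smul hxA
  have hx1 : ‖x‖ = 1 :=
    le_antisymm hx (le_of_mul_le_mul_left (by simpa using hTx.trans (T.le_opNorm x)) hTpos)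
  have hxM : x ∈ ({x₀, -x₀} : Set X) := hMT ▸ ⟨hx1, le_antisymm (T.unit_le_opNorm x hx) hTx⟩
  rcases hxM with rfl | rfl
  · exact hTx₀ ▸ hxA t ht
  · rw [hTx₀]
    simpa only [map_neg, smul_neg, ← neg_add, norm_neg] using hxA t ht

theorem BJOrth.apply_of_normAttainSet_eq_pair (hX : ReflexiveSpace X) (hT : IsCompactOperator T)
    (hA : IsCompactOperator A) (hMT : {x : X | ‖x‖ = 1 ∧ ‖T x‖ = ‖T‖} = {x₀, -x₀})
    (h : BJOrth T A) : BJOrth (T x₀) (A x₀) := by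
  intro lam
  rcases lt_trichotomy lam 0 with hlam | rfl | hlam
  · have hneg : BJOrth T (-A) := by simpa using h.smul_right (-1)
    simpa using norm_apply_le_norm_add_smul_of_bjOrth hX hT hA.neg hMT hneg (neg_pos.2 hlam)
  · simp
  · exact norm_apply_le_norm_add_smul_of_bjOrth hX hT hA hMT h hlam

end Operators

theorem symmetric_of_eigenvector_general {X : Type*}
    [NormedAddCommGroup X] [NormedSpace ℝ X]
    (hX : ReflexiveSpace X)
    (T : X →L[ℝ] X) (hTc : IsCompactOperator T) (hT : ‖T‖ = 1)
    (hrs : RightSymmetricCompactOp T)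
    (x₀ : X) (hx₀ : ‖x₀‖ = 1)
    (hMT : {x : X | ‖x‖ = 1 ∧ ‖T x‖ = ‖T‖} = {x₀, -x₀})
    (hop : LeftOPAt T x₀)
    (μ : ℝ) (hμ : T x₀ = μ • x₀) :
    LeftSymmetricPt x₀ ∧ RightSymmetricPt x₀ := by
  have hx₀0 : x₀ ≠ 0 := norm_ne_zero_iff.1 (hx₀.symm ▸ one_ne_zero)
  have hμ0 : μ ≠ 0 := by
    rintro rfl
    simpa [hμ, hT] using norm_apply_eq_opNorm_of_normAttainSet_eq_pair hMT
  have key : ∀ A : X →L[ℝ] X, IsCompactOperator A → BJOrth A T → BJOrth x₀ (A x₀) :=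
    fun A hA hAT => by
      have := (hrs A hA hAT).apply_of_normAttainSet_eq_pair hX hTc hA hMT
      exact (hμ ▸ this).of_smul_left hμ0
  constructor
  · intro y hy
    rcases eq_or_ne y 0 with rfl | hy0
    · exact bjOrth_zero_left x₀
    obtain ⟨g, hg, hgy⟩ := exists_dual_vector ℝ y (norm_ne_zero_iff.2 hy0)
    have hgu : g (‖y‖⁻¹ • y) = 1 := by simp [hgy, hy0]
    have hAT : BJOrth (g.smulRight x₀) T := by
      refine ContinuousLinearMap.bjOrth_of_apply (u := ‖y‖⁻¹ • y) (by simp [norm_smul, hy0])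
        (by rw [ContinuousLinearMap.smulRight_apply, hgu, one_smul,
          ContinuousLinearMap.norm_smulRight_apply, hg, hx₀, one_mul]) ?_
      rw [ContinuousLinearMap.smulRight_apply, hgu, one_smul, map_smul]
      exact ((hμ ▸ hop y hy).of_smul_left hμ0).smul_right ‖y‖⁻¹
    have hgx₀ : g x₀ = 0 :=
      eq_zero_of_bjOrth_smul_self hx₀0 (key _ (isCompactOperator_smulRight g x₀) hAT)
    exact bjOrth_of_dual hg.le hgy hgx₀
  · intro y hy
    obtain ⟨f, hf, hfx₀⟩ := exists_dual_vector ℝ x₀ (norm_ne_zero_iff.2 hx₀0)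
    rw [hx₀] at hfx₀
    have hAT : BJOrth (f.smulRight y) T :=
      ContinuousLinearMap.bjOrth_of_apply hx₀.le (by simp [hf, hfx₀])
        (by simpa [hfx₀, hμ] using hy.smul_right μ)
    simpa [hfx₀] using key _ (isCompactOperator_smulRight f y) hAT

/-- Let `X` be a reflexive Banach space and `T : X → X` a norm-one compact
operator that is a right-symmetric point of the space of compact operators on `X`, with
`M_T = {x₀, -x₀}`, and left orthogonality preserving at `x₀`. If `x₀` is an eigenvector of `T`,
then `x₀` is both a left-symmetric and a right-symmetric point of `X`. -/
theorem symmetric_of_eigenvector {X : Type*}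
    [NormedAddCommGroup X] [NormedSpace ℝ X] [CompleteSpace X]
    (hX : ReflexiveSpace X)
    (T : X →L[ℝ] X) (hTc : IsCompactOperator T) (hT : ‖T‖ = 1)
    (hrs : RightSymmetricCompactOp T)
    (x₀ : X) (hx₀ : ‖x₀‖ = 1)
    (hMT : {x : X | ‖x‖ = 1 ∧ ‖T x‖ = ‖T‖} = {x₀, -x₀})
    (hop : LeftOPAt T x₀)
    (μ : ℝ) (hμ : T x₀ = μ • x₀) :
    LeftSymmetricPt x₀ ∧ RightSymmetricPt x₀ :=
  symmetric_of_eigenvector_general hX T hTc hT hrs x₀ hx₀ hMT hop μ hμ
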